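/- Fix t > 0 and r ∈ (0,1), and for the weighted random recursive tree with root weight t let A_n(r) := E[Σ_{u ∈ T'_n} r^{d(u)}] and B_n(r) := E[Σ_{u,w ∈ T'_n} r^{d(u,w)}] (the latter sum over all ordered pairs, including u = w). With the convention A_{−1}(r) := 0 and B_{−1}(r) := 0, for every n ≥ 0 the recursion B_n(r) = (1 + 2r/(n+t)) B_{n−1}(r) + (2rt/(n+t)) A_{n−1}(r) + 1 holds. -/

import Mathlib

open MeasureTheory ProbabilityTheory Filter Topology

instance : MeasurableSpace (Option ℕ) := ⊤

/-- Depth (graph distance to the root `o`) of the vertex `w n` in the recursive tree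
whose parent map is `P` : `P n = none` means the parent of `w n` is the root `o`, and
`P n = some j` (with `j < n`) means the parent of `w n` is `w j`. -/
def wrrtDepth (P : ℕ → Option ℕ) : ℕ → ℕ
  | n =>
    match P n with
    | none => 1
    | some j => if h : j < n then wrrtDepth P j + 1 else 1
termination_by n => n

/-- The parent of a vertex (`none` is the root `o`, `some n` is the vertex `w n`). -/
def wrrtParent (P : ℕ → Option ℕ) : Option ℕ → Option ℕ
  | none => none
  | some n =>
    match P n with
    | none => none
    | some j => if j < n then some j else none

/-- Depth of a vertex of the recursive tree (`none` is the root `o`). -/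
def wrrtDepthV (P : ℕ → Option ℕ) : Option ℕ → ℕ
  | none => 0
  | some n => wrrtDepth P n

def wrrtDistAux (P : ℕ → Option ℕ) : ℕ → Option ℕ → Option ℕ → ℕ
  | 0, _, _ => 0
  | fuel + 1, u, w =>
    if u = w then 0
    else if wrrtDepthV P u < wrrtDepthV P w then wrrtDistAux P fuel u (wrrtParent P w) + 1
    else wrrtDistAux P fuel (wrrtParent P u) w + 1

/-- Graph distance `d(u,w)` between two vertices of the recursive tree with parent
map `P`: repeatedly move the deeper vertex to its parent until the two meet. -/
def wrrtDist (P : ℕ → Option ℕ) (u w : Option ℕ) : ℕ :=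
  wrrtDistAux P (wrrtDepthV P u + wrrtDepthV P w) u w

/-- `A_n(r) = E [ ∑_{u ∈ T'_n} r^{d(u)} ]`, the sum over the non-root vertices
`w_0, …, w_n` of the random recursive tree with (random) parent maps `p · ω`. -/
noncomputable def wrrtA {Ω : Type*} [MeasurableSpace Ω] (μ : Measure Ω) (r : ℝ)
    (p : ℕ → Ω → Option ℕ) (n : ℕ) : ℝ :=
  ∫ ω, (∑ u ∈ Finset.range (n + 1), r ^ wrrtDepth (fun k => p k ω) u) ∂μ

/-- `B_n(r) = E [ ∑_{u,w ∈ T'_n} r^{d(u,w)} ]`, the sum over all ordered pairs of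
non-root vertices of the random recursive tree with (random) parent maps `p · ω`. -/
noncomputable def wrrtB {Ω : Type*} [MeasurableSpace Ω] (μ : Measure Ω) (r : ℝ)
    (p : ℕ → Ω → Option ℕ) (n : ℕ) : ℝ :=
  ∫ ω, (∑ u ∈ Finset.range (n + 1), ∑ w ∈ Finset.range (n + 1),
      r ^ wrrtDist (fun k => p k ω) (some u) (some w)) ∂μ


/-! Splitting off the pairs that contain the newest vertex `w (n+1)` gives
`B (n+1) = B n + 2 E[∑_{u ∈ T'_n} r^{d(u, w (n+1))}] + 1`, by symmetry of `d` and `d(w,w) = 0`.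
Every path from an older vertex to `w (n+1)` ends with the edge from its parent `v`, so the middle
sum is `r ∑_{u ∈ T'_n} r^{d(u,v)}`. The parent is a function of `p (n+1)` alone, hence independent
of `T_n`: it is the root with probability `t/(n+1+t)`, which contributes `A n`, and each `w j`,
`j ≤ n`, with probability `1/(n+1+t)`, which together contribute `B n`. -/

open Finset

lemma filter_lt_mem_insertNone_range (x : Option ℕ) (m : ℕ) :
    x.filter (· < m) ∈ insertNone (range m) :=
  mem_insertNone.mpr fun j hj => by simpa using (Option.mem_filter_iff.mp hj).2

section Tree

variable (P : ℕ → Option ℕ)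

lemma wrrtDepth_eq (n : ℕ) :
    wrrtDepth P n = match P n with
      | none => 1
      | some j => if j < n then wrrtDepth P j + 1 else 1 := by
  rw [wrrtDepth]
  cases P n with
  | none => rfl
  | some j => by_cases h : j < n <;> simp [h]

lemma one_le_wrrtDepth (n : ℕ) : 1 ≤ wrrtDepth P n := by
  rw [wrrtDepth_eq]
  split <;> (try split) <;> simp

lemma wrrtDepth_le (n : ℕ) : wrrtDepth P n ≤ n + 1 := by
  induction n using Nat.strong_induction_on with
  | _ n ih =>
    rw [wrrtDepth_eq]
    split
    · omega
    · split_ifs with h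
      · exact Nat.succ_le_succ ((ih _ h).trans h)
      · omega

lemma wrrtParent_some (n : ℕ) : wrrtParent P (some n) = (P n).filter (· < n) := by
  simp only [wrrtParent]
  cases P n with
  | none => rfl
  | some j => by_cases h : j < n <;> simp [Option.filter_some, h]

lemma wrrtParent_mem_insertNone_range {m : ℕ} {u : Option ℕ}
    (hu : u ∈ insertNone (range m)) : wrrtParent P u ∈ insertNone (range m) := by
  cases u with
  | none => exact hu
  | some k =>
    have hk : k < m := by simpa using hu
    exact insertNone.monotone (range_mono hk.le)
      (wrrtParent_some P k ▸ filter_lt_mem_insertNone_range _ k)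

lemma wrrtDepthV_parent (u : Option ℕ) :
    wrrtDepthV P (wrrtParent P u) = wrrtDepthV P u - 1 := by
  cases u with
  | none => rfl
  | some k =>
    simp only [wrrtDepthV, wrrtParent]
    rw [wrrtDepth_eq P k]
    cases P k with
    | none => rfl
    | some j => by_cases h : j < k <;> simp [h]

lemma eq_none_of_wrrtDepthV_eq_zero {u : Option ℕ} (h : wrrtDepthV P u = 0) : u = none := by
  cases u with
  | none => rfl
  | some k => exact absurd h (Nat.one_le_iff_ne_zero.mp (one_le_wrrtDepth P k))

lemma wrrtDepthV_ne_zero_of_le {u w : Option ℕ} (hne : u ≠ w)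
    (h : wrrtDepthV P w ≤ wrrtDepthV P u) : wrrtDepthV P u ≠ 0 := fun h0 => hne <|
  (eq_none_of_wrrtDepthV_eq_zero P h0).trans (eq_none_of_wrrtDepthV_eq_zero P (by omega)).symm

lemma wrrtDepthV_le {N : ℕ} {u : Option ℕ} (hu : u ∈ insertNone (range N)) :
    wrrtDepthV P u ≤ N := by
  cases u with
  | none => exact Nat.zero_le N
  | some k =>
    have hk : k < N := by simpa using hu
    exact (wrrtDepth_le P k).trans hk

lemma wrrtDist_self (u : Option ℕ) : wrrtDist P u u = 0 := by
  unfold wrrtDist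
  cases wrrtDepthV P u + wrrtDepthV P u <;> simp [wrrtDistAux]

lemma wrrtDist_le (u w : Option ℕ) : wrrtDist P u w ≤ wrrtDepthV P u + wrrtDepthV P w := by
  suffices ∀ fuel u w, wrrtDistAux P fuel u w ≤ fuel from this _ u w
  intro fuel
  induction fuel with
  | zero => intro u w; rfl
  | succ fuel ih =>
    intro u w
    simp only [wrrtDistAux]
    split_ifs
    · omega
    · exact Nat.succ_le_succ (ih _ _)
    · exact Nat.succ_le_succ (ih _ _)

lemma wrrtDist_of_lt {u w : Option ℕ} (h : wrrtDepthV P u < wrrtDepthV P w) :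
    wrrtDist P u w = wrrtDist P u (wrrtParent P w) + 1 := by
  have hne : u ≠ w := by rintro rfl; exact h.false
  have hfuel : wrrtDepthV P u + wrrtDepthV P w
      = wrrtDepthV P u + wrrtDepthV P (wrrtParent P w) + 1 := by
    rw [wrrtDepthV_parent]; omega
  rw [wrrtDist, hfuel, wrrtDistAux, if_neg hne, if_pos h, wrrtDist]

lemma wrrtDist_of_le {u w : Option ℕ} (hne : u ≠ w) (h : wrrtDepthV P w ≤ wrrtDepthV P u) :
    wrrtDist P u w = wrrtDist P (wrrtParent P u) w + 1 := by
  have hu := wrrtDepthV_ne_zero_of_le P hne h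
  have hfuel : wrrtDepthV P u + wrrtDepthV P w
      = wrrtDepthV P (wrrtParent P u) + wrrtDepthV P w + 1 := by
    rw [wrrtDepthV_parent]; omega
  rw [wrrtDist, hfuel, wrrtDistAux, if_neg hne, if_neg h.not_gt, wrrtDist]

lemma wrrtDist_none (u : Option ℕ) : wrrtDist P u none = wrrtDepthV P u := by
  by_cases hu : u = none
  · rw [hu, wrrtDist_self]; rfl
  have hpos : wrrtDepthV P u ≠ 0 := fun h => hu (eq_none_of_wrrtDepthV_eq_zero P h)
  rw [wrrtDist_of_le P hu (Nat.zero_le _), wrrtDist_none (wrrtParent P u), wrrtDepthV_parent]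
  omega
termination_by wrrtDepthV P u
decreasing_by rw [wrrtDepthV_parent]; omega

lemma wrrtDist_symm (u w : Option ℕ) : wrrtDist P u w = wrrtDist P w u := by
  by_cases huw : u = w
  · rw [huw]
  rcases lt_trichotomy (wrrtDepthV P u) (wrrtDepthV P w) with h | h | h
  · rw [wrrtDist_of_lt P h, wrrtDist_of_le P (Ne.symm huw) h.le,
      wrrtDist_symm u (wrrtParent P w)]
  · have hpos := wrrtDepthV_ne_zero_of_le P huw h.ge
    have hlt : wrrtDepthV P (wrrtParent P u) < wrrtDepthV P w := by
      rw [wrrtDepthV_parent]; omega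
    have hlt' : wrrtDepthV P (wrrtParent P w) < wrrtDepthV P u := by
      rw [wrrtDepthV_parent]; omega
    rw [wrrtDist_of_le P huw h.ge, wrrtDist_of_lt P hlt, wrrtDist_of_le P (Ne.symm huw) h.le,
      wrrtDist_of_lt P hlt', wrrtDist_symm (wrrtParent P u) (wrrtParent P w)]
  · rw [wrrtDist_of_le P huw h.le, wrrtDist_of_lt P h, wrrtDist_symm (wrrtParent P u) w]
termination_by wrrtDepthV P u + wrrtDepthV P w
decreasing_by all_goals rw [wrrtDepthV_parent]; omega

lemma wrrtDist_some_eq_parent_add_one {m : ℕ} {u : Option ℕ} (hu : u ∈ insertNone (range m)) :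
    wrrtDist P u (some m) = wrrtDist P u (wrrtParent P (some m)) + 1 := by
  by_cases h : wrrtDepthV P u < wrrtDepthV P (some m)
  · exact wrrtDist_of_lt P h
  have hm := one_le_wrrtDepth P m
  have hne : u ≠ some m := by rintro rfl; simp at hu
  have hlt : wrrtDepthV P (wrrtParent P (some m)) < wrrtDepthV P u := by
    rw [wrrtDepthV_parent]; simp only [wrrtDepthV] at h ⊢; omega
  have hne' : u ≠ wrrtParent P (some m) := by rintro rfl; exact hlt.false
  rw [wrrtDist_of_le P hne (not_lt.mp h), wrrtDist_of_le P hne' hlt.le,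
    wrrtDist_some_eq_parent_add_one (wrrtParent_mem_insertNone_range P hu)]
termination_by wrrtDepthV P u
decreasing_by rw [wrrtDepthV_parent]; simp only [wrrtDepthV] at h; omega

end Tree

section Locality

variable {P Q : ℕ → Option ℕ} {N : ℕ}

lemma wrrtDepth_congr (h : ∀ k < N, P k = Q k) {k : ℕ} (hk : k < N) :
    wrrtDepth P k = wrrtDepth Q k := by
  induction k using Nat.strong_induction_on with
  | _ k ih =>
    rw [wrrtDepth_eq P, wrrtDepth_eq Q, ← h k hk]
    split
    · rfl
    · split_ifs with hj
      · rw [ih _ hj (hj.trans hk)]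
      · rfl

lemma wrrtDepthV_congr (h : ∀ k < N, P k = Q k) {u : Option ℕ}
    (hu : u ∈ insertNone (range N)) : wrrtDepthV P u = wrrtDepthV Q u := by
  cases u with
  | none => rfl
  | some k => exact wrrtDepth_congr h (by simpa using hu)

lemma wrrtParent_congr (h : ∀ k < N, P k = Q k) {u : Option ℕ}
    (hu : u ∈ insertNone (range N)) : wrrtParent P u = wrrtParent Q u := by
  cases u with
  | none => rfl
  | some k => rw [wrrtParent_some, wrrtParent_some, h k (by simpa using hu)]

lemma wrrtDist_congr (h : ∀ k < N, P k = Q k) {u w : Option ℕ}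
    (hu : u ∈ insertNone (range N)) (hw : w ∈ insertNone (range N)) :
    wrrtDist P u w = wrrtDist Q u w := by
  by_cases huw : u = w
  · rw [huw, wrrtDist_self, wrrtDist_self]
  have hdu := wrrtDepthV_congr h hu
  have hdw := wrrtDepthV_congr h hw
  rcases lt_or_ge (wrrtDepthV P u) (wrrtDepthV P w) with hlt | hle
  · rw [wrrtDist_of_lt P hlt, wrrtDist_of_lt Q (hdu ▸ hdw ▸ hlt), wrrtParent_congr h hw,
      wrrtDist_congr h hu (wrrtParent_mem_insertNone_range Q hw)]
  · have hpos := wrrtDepthV_ne_zero_of_le P huw hle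
    rw [wrrtDist_of_le P huw hle, wrrtDist_of_le Q huw (hdu ▸ hdw ▸ hle), wrrtParent_congr h hu,
      wrrtDist_congr h (wrrtParent_mem_insertNone_range Q hu) hw]
termination_by wrrtDepthV P u + wrrtDepthV P w
decreasing_by
  all_goals
    first
    | rw [← wrrtParent_congr h hw, wrrtDepthV_parent]
    | rw [← wrrtParent_congr h hu, wrrtDepthV_parent]
    omega

end Locality

def wrrtExtend {N : ℕ} (y : range N → Option ℕ) (k : ℕ) : Option ℕ :=
  if h : k ∈ range N then y ⟨k, h⟩ else none

lemma wrrtDist_extend_restrict (P : ℕ → Option ℕ) {N : ℕ} {u w : Option ℕ}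
    (hu : u ∈ insertNone (range N)) (hw : w ∈ insertNone (range N)) :
    wrrtDist (wrrtExtend ((range N).restrict P)) u w = wrrtDist P u w :=
  wrrtDist_congr (fun k hk => by simp [wrrtExtend, hk]) hu hw

/-- `∑_{u ∈ T'_n} r^{d(u,v)}`. -/
def wrrtDistPowSum (P : ℕ → Option ℕ) (r : ℝ) (n : ℕ) (v : Option ℕ) : ℝ :=
  ∑ u ∈ range (n + 1), r ^ wrrtDist P (some u) v

section DistPowSum

variable (P : ℕ → Option ℕ) (r : ℝ) (n : ℕ)

lemma wrrtDistPowSum_none :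
    wrrtDistPowSum P r n none = ∑ u ∈ range (n + 1), r ^ wrrtDepth P u := by
  simp only [wrrtDistPowSum, wrrtDist_none, wrrtDepthV]

lemma sum_sum_pow_wrrtDist_eq_sum_wrrtDistPowSum :
    ∑ u ∈ range (n + 1), ∑ w ∈ range (n + 1), r ^ wrrtDist P (some u) (some w) =
      ∑ w ∈ range (n + 1), wrrtDistPowSum P r n (some w) :=
  sum_comm

lemma sum_sum_pow_wrrtDist_succ :
    ∑ u ∈ range (n + 1 + 1), ∑ w ∈ range (n + 1 + 1), r ^ wrrtDist P (some u) (some w) =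
      ∑ u ∈ range (n + 1), ∑ w ∈ range (n + 1), r ^ wrrtDist P (some u) (some w) +
        2 * wrrtDistPowSum P r n (some (n + 1)) + 1 := by
  simp only [sum_range_succ _ (n + 1), sum_add_distrib, wrrtDist_self, pow_zero,
    wrrtDist_symm P (some (n + 1)), wrrtDistPowSum]
  ring

lemma wrrtDistPowSum_some_succ :
    wrrtDistPowSum P r n (some (n + 1)) =
      r * wrrtDistPowSum P r n (wrrtParent P (some (n + 1))) := by
  rw [wrrtDistPowSum, wrrtDistPowSum, mul_sum]
  refine sum_congr rfl fun u hu => ?_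
  rw [wrrtDist_some_eq_parent_add_one P (by simpa using hu), pow_succ, mul_comm]

lemma wrrtDistPowSum_extend_restrict {v : Option ℕ} (hv : v ∈ insertNone (range (n + 1))) :
    wrrtDistPowSum (wrrtExtend ((range (n + 1)).restrict P)) r n v = wrrtDistPowSum P r n v :=
  sum_congr rfl fun u hu => by rw [wrrtDist_extend_restrict P (by simpa using hu) hv]

end DistPowSum

theorem integral_eq_sum_measureReal_mul_of_indepFun {Ω β γ : Type*} [MeasurableSpace Ω]
    {μ : Measure Ω} [MeasurableSpace β] [MeasurableSingletonClass β] [MeasurableSpace γ]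
    {V : Ω → β} {Y : Ω → γ} (hVY : IndepFun V Y μ) (hV : Measurable V)
    {s : Finset β} (hs : ∀ ω, V ω ∈ s) {f : β → γ → ℝ} (hf : ∀ v, Measurable (f v))
    (hint : ∀ v ∈ s, Integrable (fun ω => f v (Y ω)) μ) :
    ∫ ω, f (V ω) (Y ω) ∂μ = ∑ v ∈ s, μ.real (V ⁻¹' {v}) * ∫ ω, f v (Y ω) ∂μ := by
  have hsplit : ∀ ω, f (V ω) (Y ω) = ∑ v ∈ s, ({v} : Set β).indicator 1 (V ω) * f v (Y ω) := by
    intro ω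
    rw [sum_eq_single_of_mem (V ω) (hs ω) fun v _ hv => by simp [Ne.symm hv]]
    simp
  have hind : ∀ v, Measurable (({v} : Set β).indicator (1 : β → ℝ)) := fun v =>
    measurable_one.indicator (measurableSet_singleton v)
  simp_rw [hsplit]
  rw [integral_finsetSum _ fun v hv => (hint v hv).bdd_mul (c := 1)
    (f := fun ω => ({v} : Set β).indicator 1 (V ω))
    ((hind v).comp hV).aestronglyMeasurable (ae_of_all _ fun ω => by
      by_cases h : V ω = v <;> simp [h])]
  refine sum_congr rfl fun v hv => ?_
  rw [← integral_indicator_one (hV (measurableSet_singleton v))]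
  exact (hVY.comp (hind v) (hf v)).integral_mul_eq_mul_integral
    ((hind v).comp hV).aestronglyMeasurable (hint v hv).aestronglyMeasurable

section Law

variable {Ω : Type*} [MeasurableSpace Ω] {μ : Measure Ω} {X : Ω → Option ℕ} {m : ℕ} {t : ℝ}

lemma measureReal_filter_eq_some (hX : ∀ j < m, μ {ω | X ω = some j} = ENNReal.ofReal (1 / (m + t)))
    {j : ℕ} (hj : j < m) (ht : 0 < t) :
    μ.real {ω | (X ω).filter (· < m) = some j} = 1 / (m + t) := by
  have hset : {ω | (X ω).filter (· < m) = some j} = {ω | X ω = some j} := by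
    ext ω; simp [Option.filter_eq_some_iff, hj]
  rw [hset, measureReal_def, hX j hj, ENNReal.toReal_ofReal (by positivity)]

lemma measureReal_filter_eq_none [IsProbabilityMeasure μ] (hXm : Measurable X)
    (hX : ∀ j < m, μ {ω | X ω = some j} = ENNReal.ofReal (1 / (m + t))) (ht : 0 < t) :
    μ.real {ω | (X ω).filter (· < m) = none} = t / (m + t) := by
  have hcompl : {ω | (X ω).filter (· < m) = none}ᶜ = ⋃ j ∈ range m, {ω | X ω = some j} := by
    ext ω
    simp [Option.filter_eq_none_iff, and_comm]
  have hmeas : ∀ j ∈ range m, MeasurableSet {ω | X ω = some j} := fun j _ =>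
    hXm (measurableSet_singleton (some j))
  have hdisj : (range m : Set ℕ).PairwiseDisjoint fun j => {ω | X ω = some j} := fun a _ b _ hab =>
    Set.disjoint_left.mpr fun ω ha hb => hab (Option.some.inj (ha.symm.trans hb))
  have hmass : μ.real {ω | (X ω).filter (· < m) = none}ᶜ = m / (m + t) := by
    rw [hcompl, measureReal_biUnion_finset hdisj hmeas]
    simp_rw [measureReal_def]
    rw [sum_congr rfl fun j hj => by rw [hX j (mem_range.mp hj)], sum_const, card_range,
      ENNReal.toReal_ofReal (by positivity), nsmul_eq_mul]
    ring
  have hmeasNone : MeasurableSet {ω | (X ω).filter (· < m) = none} :=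
    hXm (t := {x | x.filter (· < m) = none}) MeasurableSpace.measurableSet_top
  rw [probReal_compl_eq_one_sub hmeasNone] at hmass
  field_simp at hmass ⊢
  linarith

end Law

section RandomTree

variable {Ω : Type*} [MeasurableSpace Ω] {μ : Measure Ω} {p : ℕ → Ω → Option ℕ}

lemma measurable_restrict_range (hp : ∀ n, Measurable (p n)) (N : ℕ) :
    Measurable fun ω => (range N).restrict fun k => p k ω :=
  measurable_pi_lambda _ fun i => hp i

lemma integrable_pow_wrrtDist [IsFiniteMeasure μ] (hp : ∀ n, Measurable (p n)) (r : ℝ)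
    {N : ℕ} {u w : Option ℕ} (hu : u ∈ insertNone (range N)) (hw : w ∈ insertNone (range N)) :
    Integrable (fun ω => r ^ wrrtDist (fun k => p k ω) u w) μ := by
  have hmeas : Measurable fun ω => r ^ wrrtDist (fun k => p k ω) u w := by
    have hfactor : (fun ω => r ^ wrrtDist (fun k => p k ω) u w) =
        (fun y => r ^ wrrtDist (wrrtExtend y) u w) ∘
          fun ω => (range N).restrict fun k => p k ω := by
      funext ω
      simp only [Function.comp, wrrtDist_extend_restrict _ hu hw]
    rw [hfactor]
    exact (measurable_of_countable _).comp (measurable_restrict_range hp N)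
  refine Integrable.of_bound hmeas.aestronglyMeasurable ((1 + |r|) ^ (2 * N))
    (ae_of_all _ fun ω => ?_)
  have hd : wrrtDist (fun k => p k ω) u w ≤ 2 * N := by
    have := wrrtDist_le (fun k => p k ω) u w
    have := wrrtDepthV_le (fun k => p k ω) hu
    have := wrrtDepthV_le (fun k => p k ω) hw
    omega
  rw [norm_pow, Real.norm_eq_abs]
  calc |r| ^ wrrtDist (fun k => p k ω) u w
      ≤ (1 + |r|) ^ wrrtDist (fun k => p k ω) u w := pow_le_pow_left₀ (abs_nonneg r) (by linarith) _
    _ ≤ (1 + |r|) ^ (2 * N) := pow_le_pow_right₀ (by linarith [abs_nonneg r]) hd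

lemma integrable_wrrtDistPowSum [IsFiniteMeasure μ] (hp : ∀ n, Measurable (p n)) (r : ℝ)
    {n N : ℕ} (hn : n < N) {v : Option ℕ} (hv : v ∈ insertNone (range N)) :
    Integrable (fun ω => wrrtDistPowSum (fun k => p k ω) r n v) μ :=
  integrable_finsetSum _ fun u hu =>
    integrable_pow_wrrtDist hp r (by simp only [some_mem_insertNone, mem_range] at hu ⊢; omega) hv

lemma wrrtA_eq_integral (r : ℝ) (n : ℕ) :
    wrrtA μ r p n = ∫ ω, wrrtDistPowSum (fun k => p k ω) r n none ∂μ := by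
  simp only [wrrtA, wrrtDistPowSum_none]

lemma wrrtB_eq_sum_integral [IsFiniteMeasure μ] (hp : ∀ n, Measurable (p n)) (r : ℝ) (n : ℕ) :
    wrrtB μ r p n = ∑ j ∈ range (n + 1), ∫ ω, wrrtDistPowSum (fun k => p k ω) r n (some j) ∂μ := by
  simp only [wrrtB, sum_sum_pow_wrrtDist_eq_sum_wrrtDistPowSum]
  exact integral_finsetSum _ fun j hj =>
    integrable_wrrtDistPowSum hp r (lt_add_one n) (some_mem_insertNone.mpr hj)

lemma wrrtB_succ [IsProbabilityMeasure μ] (hp : ∀ n, Measurable (p n)) (r : ℝ) (n : ℕ) :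
    wrrtB μ r p (n + 1) =
      wrrtB μ r p n + 2 * ∫ ω, wrrtDistPowSum (fun k => p k ω) r n (some (n + 1)) ∂μ + 1 := by
  have hB : Integrable (fun ω => ∑ u ∈ range (n + 1), ∑ w ∈ range (n + 1),
      r ^ wrrtDist (fun k => p k ω) (some u) (some w)) μ := by
    simp only [sum_sum_pow_wrrtDist_eq_sum_wrrtDistPowSum]
    exact integrable_finsetSum _ fun j hj =>
      integrable_wrrtDistPowSum hp r (lt_add_one n) (some_mem_insertNone.mpr hj)
  have hC : Integrable (fun ω => 2 * wrrtDistPowSum (fun k => p k ω) r n (some (n + 1))) μ :=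
    (integrable_wrrtDistPowSum hp r (by omega : n < n + 2) (by simp)).const_mul 2
  simp only [wrrtB, sum_sum_pow_wrrtDist_succ]
  rw [integral_add ?_ (integrable_const 1), integral_add hB hC, integral_const_mul]
  · simp
  · exact hB.add hC

lemma integral_wrrtDistPowSum_some_succ [IsProbabilityMeasure μ] (hp : ∀ n, Measurable (p n))
    (hindep : iIndepFun p μ) {t : ℝ} (ht : 0 < t)
    (hparent : ∀ n : ℕ, ∀ j < n, μ {ω | p n ω = some j} = ENNReal.ofReal (1 / (n + t)))
    (r : ℝ) (n : ℕ) :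
    ∫ ω, wrrtDistPowSum (fun k => p k ω) r n (some (n + 1)) ∂μ =
      r * (t / ((n + 1 : ℕ) + t) * wrrtA μ r p n + 1 / ((n + 1 : ℕ) + t) * wrrtB μ r p n) := by
  simp only [wrrtDistPowSum_some_succ _ r n, wrrtParent_some, integral_const_mul]
  set V : Ω → Option ℕ := fun ω => (p (n + 1) ω).filter (· < n + 1)
  set Y : Ω → (range (n + 1) → Option ℕ) := fun ω => (range (n + 1)).restrict fun k => p k ω
  have hV : Measurable V :=
    (measurable_of_countable fun x : Option ℕ => x.filter (· < n + 1)).comp (hp (n + 1))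
  have hVY : IndepFun V Y μ :=
    (hindep.indepFun_finset {n + 1} (range (n + 1)) (by simp) hp).comp
      (measurable_of_countable fun y : ({n + 1} : Finset ℕ) → Option ℕ =>
        (y ⟨n + 1, mem_singleton_self _⟩).filter (· < n + 1)) measurable_id
  have hVmem : ∀ ω, V ω ∈ insertNone (range (n + 1)) := fun ω =>
    filter_lt_mem_insertNone_range _ _
  have hfY : ∀ ω, ∀ v ∈ insertNone (range (n + 1)),
      wrrtDistPowSum (wrrtExtend (Y ω)) r n v = wrrtDistPowSum (fun k => p k ω) r n v :=
    fun ω v hv => wrrtDistPowSum_extend_restrict _ r n hv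
  have hsplit := integral_eq_sum_measureReal_mul_of_indepFun hVY hV hVmem
    (f := fun v y => wrrtDistPowSum (wrrtExtend y) r n v) (fun v => measurable_of_countable _)
    fun v hv => (integrable_wrrtDistPowSum hp r (lt_add_one n) hv).congr
      (ae_of_all _ fun ω => (hfY ω v hv).symm)
  simp only [hfY _ _ (hVmem _)] at hsplit
  rw [sum_congr rfl fun v hv => congrArg (μ.real (V ⁻¹' {v}) * ·)
    (integral_congr_ae (ae_of_all _ fun ω => hfY ω v hv))] at hsplit
  have hnone : μ.real (V ⁻¹' {none}) = t / ((n + 1 : ℕ) + t) :=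
    measureReal_filter_eq_none (hp (n + 1)) (hparent (n + 1)) ht
  have hsome : ∀ j ∈ range (n + 1), μ.real (V ⁻¹' {some j}) = 1 / ((n + 1 : ℕ) + t) :=
    fun j hj => measureReal_filter_eq_some (hparent (n + 1)) (mem_range.mp hj) ht
  change r * ∫ ω, wrrtDistPowSum (fun k => p k ω) r n (V ω) ∂μ = _
  simp only [hsplit, sum_insertNone]
  rw [hnone, sum_congr rfl fun j hj => by rw [hsome j hj], wrrtA_eq_integral,
    wrrtB_eq_sum_integral hp, mul_sum]

end RandomTree

theorem wrrt_B_recursion_general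
    {Ω : Type*} [MeasurableSpace Ω] (μ : Measure Ω) [IsProbabilityMeasure μ]
    (t r : ℝ) (ht : 0 < t)
    -- `p n` is the (random) parent of the vertex `w n` of the weighted random
    -- recursive tree with root weight `t`:
    (p : ℕ → Ω → Option ℕ) (hpmeas : ∀ n, Measurable (p n))
    (hparent : ∀ n : ℕ, ∀ j < n, μ {ω | p n ω = some j} = ENNReal.ofReal (1 / (n + t)))
    (hindep : iIndepFun p μ)
    :
    wrrtB μ r p 0 = 1 ∧
    ∀ n : ℕ, wrrtB μ r p (n + 1) =
      (1 + 2 * r / ((n : ℝ) + 1 + t)) * wrrtB μ r p n +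
        (2 * r * t / ((n : ℝ) + 1 + t)) * wrrtA μ r p n + 1 := by
  refine ⟨by simp [wrrtB, wrrtDist_self], fun n => ?_⟩
  rw [wrrtB_succ hpmeas, integral_wrrtDistPowSum_some_succ hpmeas hindep ht hparent]
  have hden : (n : ℝ) + 1 + t ≠ 0 := by positivity
  push_cast
  field_simp
  ring

/-- The recursion for `B_n(r)`: with the conventions `A_{-1} = B_{-1} = 0`,
`B_n(r) = (1 + 2r/(n+t)) B_{n-1}(r) + (2rt/(n+t)) A_{n-1}(r) + 1` for all `n ≥ 0`
(the case `n = 0` reads `B_0(r) = 1`). -/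
theorem wrrt_B_recursion
    {Ω : Type*} [MeasurableSpace Ω] (μ : Measure Ω) [IsProbabilityMeasure μ]
    (t r : ℝ) (ht : 0 < t) (hr : r ∈ Set.Ioo (0 : ℝ) 1)
    -- `p n` is the (random) parent of the vertex `w n` of the weighted random
    -- recursive tree with root weight `t`:
    (p : ℕ → Ω → Option ℕ) (hpmeas : ∀ n, Measurable (p n))
    (hroot : ∀ n : ℕ, μ {ω | p n ω = none} = ENNReal.ofReal (t / (n + t)))
    (hparent : ∀ n : ℕ, ∀ j < n, μ {ω | p n ω = some j} = ENNReal.ofReal (1 / (n + t)))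
    (hindep : iIndepFun p μ)
    :
    wrrtB μ r p 0 = 1 ∧
    ∀ n : ℕ, wrrtB μ r p (n + 1) =
      (1 + 2 * r / ((n : ℝ) + 1 + t)) * wrrtB μ r p n +
        (2 * r * t / ((n : ℝ) + 1 + t)) * wrrtA μ r p n + 1 :=
  wrrt_B_recursion_general μ t r ht p hpmeas hparent hindep
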